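/- arXiv:math/0505652 — 3 statements merged into one kernel-verified Lean document; each statement's English description precedes it below -/
import Mathlib

section
/- Conversely, if f is entire and its Newton map N_f = id − f/f′ is a rational function, then f = p·e^q for some polynomials p and q. -/
/-!
Clearing denominators in `z - f/f' = r/s` gives `f' · B = f · s` with `B = X s - r`, first where
`f' s ≠ 0` and then everywhere, because entire functions form an integral domain. An entire `f`
with `f' B = f A` for polynomials `A, B ≠ 0` is of the form `p e^q`, by induction on `deg B`.
If `B` is constant, `f'/f` is a polynomial `q'` and `f e^{-q}` is constant. Otherwise let `z₀`
be a root of `B = (X - z₀) B₁` and write `f = (z - z₀)^m g` with `g` entire and `g z₀ ≠ 0`.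
Then `g' B = g (A - m B₁)`; at `z₀` the left side vanishes, so `A - m B₁ = (X - z₀) A₁` and
`g' B₁ = g A₁`, which lowers the degree.
-/

open Complex Polynomial

theorem Polynomial.exists_derivative_eq {K : Type*} [Field K] [CharZero K] (Q : K[X]) :
    ∃ q : K[X], derivative q = Q := by
  induction Q using Polynomial.induction_on' with
  | add Q₁ Q₂ h₁ h₂ =>
    obtain ⟨q₁, rfl⟩ := h₁
    obtain ⟨q₂, rfl⟩ := h₂
    exact ⟨q₁ + q₂, derivative_add⟩
  | monomial n a =>
    refine ⟨C (a / (n + 1)) * X ^ (n + 1), ?_⟩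
    rw [derivative_C_mul_X_pow, ← C_mul_X_pow_eq_monomial, Nat.add_sub_cancel]
    congr 2
    push_cast
    field_simp

theorem Polynomial.eval_fun_ne_zero {R : Type*} [CommRing R] [IsDomain R] [Infinite R]
    {p : R[X]} (hp : p ≠ 0) : (fun x => p.eval x) ≠ 0 := fun h =>
  hp <| Polynomial.funext fun x => by simpa using congrFun h x

theorem Differentiable.dslope {E : Type*} [NormedAddCommGroup E] [NormedSpace ℂ E]
    [CompleteSpace E] {f : ℂ → E} (hf : Differentiable ℂ f) (c : ℂ) :
    Differentiable ℂ (dslope f c) :=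
  differentiableOn_univ.mp <|
    (Complex.differentiableOn_dslope Filter.univ_mem).mpr hf.differentiableOn

theorem Differentiable.exists_eq_sub_pow_smul {E : Type*} [NormedAddCommGroup E]
    [NormedSpace ℂ E] [CompleteSpace E] {f : ℂ → E} (hf : Differentiable ℂ f) (hf₀ : f ≠ 0)
    (z₀ : ℂ) : ∃ (m : ℕ) (g : ℂ → E), Differentiable ℂ g ∧ g z₀ ≠ 0 ∧
      f = fun z => (z - z₀) ^ m • g z := by
  obtain ⟨p, hp⟩ := hf.analyticAt z₀
  have hp₀ : p ≠ 0 := by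
    rintro rfl
    exact hf₀ <| (AnalyticOnNhd.analyticOrderAt_eq_top_iff_eq_zero z₀ hf.analyticAt).mp <|
      analyticOrderAt_eq_top.mpr <| hp.locally_zero_iff.mpr rfl
  refine ⟨p.order, (Function.swap _root_.dslope z₀)^[p.order] f, ?_,
    hp.iterate_dslope_fslope_ne_zero hp₀, funext hp.eq_pow_order_mul_iterate_dslope⟩
  exact Function.Iterate.rec (Differentiable ℂ) hf (fun g hg => hg.dslope z₀) p.order

theorem Differentiable.eq_zero_or_eq_zero_of_mul_eq_zero {f g : ℂ → ℂ}
    (hf : Differentiable ℂ f) (hg : Differentiable ℂ g) (hfg : f * g = 0) : f = 0 ∨ g = 0 := by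
  refine (AnalyticOnNhd.eq_zero_or_eq_zero_of_mul_eq_zero (fun z _ => hf.analyticAt z)
    (fun z _ => hg.analyticAt z) (fun z _ => congrFun hfg z) isPreconnected_univ).imp ?_ ?_ <;>
  exact fun h => funext fun z => h z trivial

theorem eq_of_sub_pow_mul_eq {u v : ℂ → ℂ} (hu : Continuous u) (hv : Continuous v) {z₀ : ℂ}
    {m : ℕ} (h : ∀ z, (z - z₀) ^ m * u z = (z - z₀) ^ m * v z) : u = v :=
  Continuous.ext_on (dense_compl_singleton z₀) hu hv fun z hz =>
    mul_left_cancel₀ (pow_ne_zero m (sub_ne_zero.mpr hz)) (h z)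

theorem exists_eq_const_mul_exp_of_deriv_eq_mul {f : ℂ → ℂ} (hf : Differentiable ℂ f)
    {Q : ℂ[X]} (h : ∀ z, deriv f z = f z * Q.eval z) :
    ∃ (c : ℂ) (q : ℂ[X]), ∀ z, f z = c * exp (q.eval z) := by
  obtain ⟨q, hq⟩ := Q.exists_derivative_eq
  set F : ℂ → ℂ := fun z => f z * exp (-q.eval z)
  have hF : ∀ z, HasDerivAt F (deriv f z * exp (-q.eval z)
      + f z * (exp (-q.eval z) * -(derivative q).eval z)) z :=
    fun z => (hf z).hasDerivAt.mul (q.hasDerivAt z).neg.cexp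
  have hF' : ∀ z, deriv F z = 0 := fun z => by
    rw [(hF z).deriv, h, hq]
    ring
  refine ⟨F 0, q, fun z => ?_⟩
  rw [← is_const_of_deriv_eq_zero (fun z => (hF z).differentiableAt) hF' z 0, mul_assoc,
    ← exp_add, neg_add_cancel, exp_zero, mul_one]

theorem exists_deriv_mul_eq_of_sub_pow_mul {g : ℂ → ℂ} (hg : Differentiable ℂ g) {z₀ : ℂ}
    (hgz₀ : g z₀ ≠ 0) (m : ℕ) {A B : ℂ[X]}
    (h : ∀ z, deriv (fun w => (w - z₀) ^ m * g w) z * ((X - C z₀) * B).eval z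
      = (z - z₀) ^ m * g z * A.eval z) :
    ∃ A' : ℂ[X], ∀ z, deriv g z * B.eval z = g z * A'.eval z := by
  have hderiv : ∀ z, (z - z₀) * deriv (fun w => (w - z₀) ^ m * g w) z
      = (z - z₀) ^ m * (m * g z + (z - z₀) * deriv g z) := fun z => by
    have hd : HasDerivAt (fun w => (w - z₀) ^ m * g w)
        (m * (z - z₀) ^ (m - 1) * 1 * g z + (z - z₀) ^ m * deriv g z) z :=
      (((hasDerivAt_id z).sub_const z₀).pow m).mul (hg z).hasDerivAt
    rw [hd.deriv]
    cases m with
    | zero => simp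
    | succ k => simp only [Nat.cast_succ, Nat.add_sub_cancel, mul_one, pow_succ]; ring
  have hcont : ∀ A : ℂ[X], Continuous fun z => g z * A.eval z := fun A =>
    hg.continuous.mul A.continuous
  have hcont' : ∀ B : ℂ[X], Continuous fun z => deriv g z * B.eval z := fun B =>
    hg.deriv.continuous.mul B.continuous
  have hAm : ∀ z, deriv g z * ((X - C z₀) * B).eval z = g z * (A - C (m : ℂ) * B).eval z :=
    congrFun <| eq_of_sub_pow_mul_eq (hcont' _) (hcont _) (z₀ := z₀) (m := m) fun z => by
      simp only [eval_mul, eval_sub, eval_X, eval_C] at h hderiv ⊢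
      linear_combination h z - B.eval z * hderiv z
  have hroot : (A - C (m : ℂ) * B).IsRoot z₀ := by
    simpa [hgz₀] using (hAm z₀).symm
  obtain ⟨A', hA'⟩ := dvd_iff_isRoot.mpr hroot
  refine ⟨A', congrFun <| eq_of_sub_pow_mul_eq (hcont' _) (hcont _) (z₀ := z₀) (m := 1)
    fun z => ?_⟩
  have := hAm z
  rw [hA'] at this
  simp only [eval_mul, eval_sub, eval_X, eval_C] at this
  linear_combination this

theorem exists_eq_mul_exp_of_deriv_mul_eq {A B : ℂ[X]} (hB : B ≠ 0) {f : ℂ → ℂ}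
    (hf : Differentiable ℂ f) (h : ∀ z, deriv f z * B.eval z = f z * A.eval z) :
    ∃ p q : ℂ[X], ∀ z, f z = p.eval z * exp (q.eval z) := by
  induction hn : B.natDegree generalizing f A B with
  | zero =>
    obtain ⟨b, rfl⟩ := natDegree_eq_zero.mp hn
    have hb : b ≠ 0 := by rintro rfl; exact hB C_0
    obtain ⟨c, q, hcq⟩ := exists_eq_const_mul_exp_of_deriv_eq_mul hf (Q := C b⁻¹ * A) fun z => by
      have := h z
      simp only [eval_C, eval_mul] at this ⊢
      field_simp
      linear_combination this
    exact ⟨C c, q, by simpa using hcq⟩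
  | succ n ih =>
    rcases eq_or_ne f 0 with rfl | hf₀
    · exact ⟨0, 0, by simp⟩
    obtain ⟨z₀, hz₀⟩ := exists_root (f := B) (natDegree_pos_iff_degree_pos.mp (by omega))
    obtain ⟨B₁, rfl⟩ := dvd_iff_isRoot.mpr hz₀
    obtain ⟨m, g, hg, hgz₀, rfl⟩ := hf.exists_eq_sub_pow_smul hf₀ z₀
    simp only [smul_eq_mul] at h
    obtain ⟨A₁, hA₁⟩ := exists_deriv_mul_eq_of_sub_pow_mul hg hgz₀ m h
    have hB₁ : B₁ ≠ 0 := right_ne_zero_of_mul hB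
    obtain ⟨p, q, hpq⟩ := ih hB₁ hg hA₁ (by
      rw [natDegree_mul (X_sub_C_ne_zero z₀) hB₁, natDegree_X_sub_C] at hn
      omega)
    exact ⟨(X - C z₀) ^ m * p, q, fun z => by simp [hpq, mul_assoc]⟩

theorem deriv_mul_eval_eq_of_newton_eq_div {f : ℂ → ℂ} (hf : Differentiable ℂ f)
    (hf' : deriv f ≠ 0) {r s : ℂ[X]} (hs : s ≠ 0)
    (hrat : ∀ z : ℂ, deriv f z ≠ 0 → s.eval z ≠ 0 → z - f z / deriv f z = r.eval z / s.eval z)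
    (z : ℂ) : deriv f z * (X * s - r).eval z = f z * s.eval z := by
  have hprod : (fun z => deriv f z * (X * s - r).eval z - f z * s.eval z)
      * (deriv f * fun z => s.eval z) = 0 := funext fun z => by
    by_cases hfz : deriv f z = 0
    · simp [hfz]
    by_cases hsz : s.eval z = 0
    · simp [hsz]
    have := hrat z hfz hsz
    field_simp at this
    simp only [Pi.mul_apply, eval_sub, eval_mul, eval_X, Pi.zero_apply]
    linear_combination (deriv f z * s.eval z) * this
  have hdiff : Differentiable ℂ fun z => s.eval z := s.differentiable
  rcases Differentiable.eq_zero_or_eq_zero_of_mul_eq_zero (by fun_prop) (hf.deriv.mul hdiff)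
    hprod with h | h
  · exact sub_eq_zero.mp (congrFun h z)
  · exact absurd ((hf.deriv.eq_zero_or_eq_zero_of_mul_eq_zero hdiff h).resolve_left hf')
      (eval_fun_ne_zero hs)

/-- If `f` is a nonconstant entire function whose Newton map `N_f = id - f/f'`
is a rational function, then `f = p·e^q` for some polynomials `p` and `q`. -/
theorem entire_with_rational_newton_map
    (f : ℂ → ℂ) (hf : Differentiable ℂ f) (hnc : ∀ c : ℂ, f ≠ fun _ => c)
    (r s : Polynomial ℂ) (hs : s ≠ 0)
    (hrat : ∀ z : ℂ, deriv f z ≠ 0 → s.eval z ≠ 0 →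
      z - f z / deriv f z = r.eval z / s.eval z) :
    ∃ p q : Polynomial ℂ, ∀ z : ℂ, f z = p.eval z * Complex.exp (q.eval z) := by
  have hf' : deriv f ≠ 0 := fun h =>
    hnc (f 0) <| funext fun z => is_const_of_deriv_eq_zero hf (congrFun h) z 0
  have hnewton := deriv_mul_eval_eq_of_newton_eq_div hf hf' hs hrat
  have hB : X * s - r ≠ 0 := by
    intro hB
    have hfs : f * (fun z => s.eval z) = 0 := funext fun z => by simpa [hB] using hnewton z
    rcases hf.eq_zero_or_eq_zero_of_mul_eq_zero s.differentiable hfs with h | h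
    · exact hnc 0 h
    · exact eval_fun_ne_zero hs h
  exact exists_eq_mul_exp_of_deriv_mul_eq hB hf hnewton
end

section
/- Let g : 𝔻 → 𝔻 be holomorphic, not the identity, with g(0) = 0 and |g′(0)| < 1, and suppose g extends holomorphically to a neighborhood of ζ ∈ ∂𝔻 with g(ζ) = ζ, g′(ζ) real and positive, and the extension maps an arc of ∂𝔻 near ζ into ∂𝔻. Then ζ is a repelling fixed point: g′(ζ) > 1. -/
/-!
The quotient `g z / z` maps the disk into itself (Schwarz lemma and maximum modulus) and takes
the value `g'(0)` at `0`, so the Schwarz–Pick lemma gives `|g z| ≤ r (r + c) / (1 + c r)` on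
`|z| = r`, where `c = |g'(0)| < 1`. Along the radius to `ζ` this forces
`|g(rζ) - ζ| ≥ 1 - |g(rζ)| ≥ (1 - r)(1 + r) / (1 + c r)`, hence `|g'(ζ)| ≥ 2 / (1 + c) > 1`;
since `g'(ζ)` is a positive real, it is its own modulus.
-/

open Complex Set Metric ComplexConjugate Filter Topology

noncomputable def mobius (a w : ℂ) : ℂ := (w - a) / (1 - conj a * w)

theorem sq_norm_sub_eq (a w : ℂ) : ‖w - a‖ ^ 2 = ‖w‖ ^ 2 - 2 * (w * conj a).re + ‖a‖ ^ 2 := by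
  simp only [Complex.sq_norm, normSq_apply, sub_re, sub_im, mul_re, conj_re, conj_im]
  ring

theorem sq_norm_one_sub_conj_mul_eq (a w : ℂ) :
    ‖1 - conj a * w‖ ^ 2 = 1 - 2 * (w * conj a).re + ‖a‖ ^ 2 * ‖w‖ ^ 2 := by
  simp only [Complex.sq_norm, normSq_apply, sub_re, sub_im, mul_re, mul_im, conj_re, conj_im,
    one_re, one_im]
  ring

theorem one_sub_conj_mul_ne_zero {a w : ℂ} (ha : ‖a‖ ≤ 1) (hw : ‖w‖ < 1) :
    1 - conj a * w ≠ 0 := by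
  rw [sub_ne_zero]
  refine fun h => (?_ : ‖conj a * w‖ < 1).ne (by rw [← h, norm_one])
  rw [norm_mul, Complex.norm_conj]
  nlinarith [norm_nonneg a, norm_nonneg w]

theorem norm_mobius_lt_one {a w : ℂ} (ha : ‖a‖ < 1) (hw : ‖w‖ < 1) : ‖mobius a w‖ < 1 := by
  have hden := norm_pos_iff.2 (one_sub_conj_mul_ne_zero ha.le hw)
  rw [mobius, norm_div, div_lt_one hden]
  refine lt_of_pow_lt_pow_left₀ 2 hden.le ?_
  have : 0 < (1 - ‖a‖ ^ 2) * (1 - ‖w‖ ^ 2) := by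
    apply mul_pos <;> nlinarith [norm_nonneg a, norm_nonneg w]
  rw [sq_norm_sub_eq, sq_norm_one_sub_conj_mul_eq]
  linarith

theorem differentiableOn_mobius {a : ℂ} (ha : ‖a‖ ≤ 1) :
    DifferentiableOn ℂ (mobius a) (ball 0 1) :=
  ((differentiableOn_id.sub_const a).div
    ((differentiableOn_const 1).sub ((differentiableOn_const _).mul differentiableOn_id)))
    fun _ hw => one_sub_conj_mul_ne_zero ha (mem_ball_zero_iff.1 hw)

/-- The quadratic factors as `((1 + c r) s - (c + r)) ((1 - c r) s - (c - r))`, and the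
second factor is positive whenever the first one is. -/
theorem mul_one_add_mul_le_add_of_quadratic_nonpos {s c r : ℝ} (hc0 : 0 ≤ c) (hc : c < 1)
    (hr0 : 0 ≤ r) (hr : r < 1)
    (h : (1 - c ^ 2 * r ^ 2) * s ^ 2 - 2 * c * (1 - r ^ 2) * s + (c ^ 2 - r ^ 2) ≤ 0) :
    s * (1 + c * r) ≤ c + r := by
  by_contra! hlt
  have hcr : 0 < 1 - c * r := by nlinarith
  have hsecond : 0 < (1 - c * r) * s - (c - r) := by
    have key : (1 + c * r) * ((1 - c * r) * s - (c - r))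
        = (1 - c * r) * (s * (1 + c * r) - (c + r)) + 2 * r * (1 - c ^ 2) := by ring
    have : 0 < (1 + c * r) * ((1 - c * r) * s - (c - r)) := by
      have : 0 ≤ r * (1 - c ^ 2) := mul_nonneg hr0 (by nlinarith)
      rw [key]; nlinarith [mul_pos hcr (sub_pos.2 hlt)]
    exact pos_of_mul_pos_right this (by positivity)
  nlinarith [mul_pos (sub_pos.2 hlt) hsecond]

theorem norm_mul_le_of_norm_mobius_le {a w : ℂ} {r : ℝ} (ha : ‖a‖ < 1) (hw : ‖w‖ < 1)
    (hr0 : 0 ≤ r) (hr : r < 1) (h : ‖mobius a w‖ ≤ r) :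
    ‖w‖ * (1 + ‖a‖ * r) ≤ ‖a‖ + r := by
  have hden := norm_pos_iff.2 (one_sub_conj_mul_ne_zero ha.le hw)
  rw [mobius, norm_div, div_le_iff₀ hden] at h
  have hsq : ‖w - a‖ ^ 2 ≤ r ^ 2 * ‖1 - conj a * w‖ ^ 2 := by
    rw [← mul_pow]; exact pow_le_pow_left₀ (norm_nonneg _) h 2
  have hre : (w * conj a).re ≤ ‖w‖ * ‖a‖ := by
    simpa only [norm_mul, norm_conj] using Complex.re_le_norm (w * conj a)
  refine mul_one_add_mul_le_add_of_quadratic_nonpos (norm_nonneg a) ha hr0 hr ?_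
  rw [sq_norm_sub_eq, sq_norm_one_sub_conj_mul_eq] at hsq
  nlinarith [mul_le_mul_of_nonneg_left hre (by nlinarith : (0:ℝ) ≤ 2 * (1 - r ^ 2))]

theorem mapsTo_ball_of_mapsTo_closedBall {E : Type*} [NormedAddCommGroup E] [NormedSpace ℂ E]
    {f : ℂ → E} {U : Set ℂ} {z₀ : ℂ} {R : ℝ} (hc : IsPreconnected U) (ho : IsOpen U)
    (hd : DifferentiableOn ℂ f U) (hz₀ : z₀ ∈ U) (hmaps : MapsTo f U (closedBall 0 R))
    (hlt : ‖f z₀‖ < R) : MapsTo f U (ball 0 R) := by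
  intro z hz
  rw [mem_ball_zero_iff]
  refine (mem_closedBall_zero_iff.1 (hmaps hz)).lt_of_ne fun heq => hlt.ne ?_
  have hmax : IsMaxOn (norm ∘ f) U z := fun x hx => by
    simpa [heq] using mem_closedBall_zero_iff.1 (hmaps hx)
  exact (norm_eqOn_of_isPreconnected_of_isMaxOn hc ho hd hz hmax hz₀).trans heq

/-- Schwarz–Pick: `mobius (f 0) ∘ f` fixes `0`, so the Schwarz lemma bounds it by `‖z‖`. -/
theorem norm_mul_le_of_mapsTo_ball {f : ℂ → ℂ} (hd : DifferentiableOn ℂ f (ball 0 1))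
    (hmaps : MapsTo f (ball 0 1) (ball 0 1)) {z : ℂ} (hz : ‖z‖ < 1) :
    ‖f z‖ * (1 + ‖f 0‖ * ‖z‖) ≤ ‖f 0‖ + ‖z‖ := by
  have hf : ∀ {w}, w ∈ ball (0 : ℂ) 1 → ‖f w‖ < 1 := fun hw => mem_ball_zero_iff.1 (hmaps hw)
  have h0 : (0 : ℂ) ∈ ball 0 1 := mem_ball_self one_pos
  have hφd : DifferentiableOn ℂ (mobius (f 0) ∘ f) (ball 0 1) :=
    (differentiableOn_mobius (hf h0).le).comp hd hmaps
  have hφmaps : MapsTo (mobius (f 0) ∘ f) (ball 0 1) (closedBall 0 1) := fun w hw =>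
    mem_closedBall_zero_iff.2 (norm_mobius_lt_one (hf h0) (hf hw)).le
  have hφ0 : (mobius (f 0) ∘ f) 0 = 0 := by simp [mobius]
  exact norm_mul_le_of_norm_mobius_le (hf h0) (hf (mem_ball_zero_iff.2 hz)) (norm_nonneg z) hz
    (Complex.norm_le_norm_of_mapsTo_ball hφd hφmaps hφ0 hz)

/-- Schwarz–Pick applied to `dslope f 0`, which maps the disk into itself by the Schwarz lemma
and the maximum modulus principle. -/
theorem norm_mul_le_of_mapsTo_ball_of_map_zero {f : ℂ → ℂ} (hd : DifferentiableOn ℂ f (ball 0 1))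
    (hmaps : MapsTo f (ball 0 1) (ball 0 1)) (h0 : f 0 = 0) (h0' : ‖deriv f 0‖ < 1) {z : ℂ}
    (hz : ‖z‖ < 1) :
    ‖f z‖ * (1 + ‖deriv f 0‖ * ‖z‖) ≤ ‖z‖ * (‖deriv f 0‖ + ‖z‖) := by
  have hψd : DifferentiableOn ℂ (dslope f 0) (ball 0 1) :=
    (differentiableOn_dslope (ball_mem_nhds 0 one_pos)).2 hd
  have hψmaps : MapsTo (dslope f 0) (ball 0 1) (closedBall 0 1) := fun w hw => by
    simpa using Complex.norm_dslope_le_div_of_mapsTo_ball hd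
      (by rw [h0]; exact hmaps.mono_right ball_subset_closedBall) hw
  have hψmaps' : MapsTo (dslope f 0) (ball 0 1) (ball 0 1) :=
    mapsTo_ball_of_mapsTo_closedBall (convex_ball 0 1).isPreconnected isOpen_ball hψd
      (mem_ball_self one_pos) hψmaps (by rwa [dslope_same])
  have hf : ‖f z‖ = ‖z‖ * ‖dslope f 0 z‖ := by
    have := sub_smul_dslope f 0 z
    rw [sub_zero, h0, sub_zero] at this
    rw [← this, norm_smul]
  have := norm_mul_le_of_mapsTo_ball hψd hψmaps' hz
  rw [dslope_same] at this
  rw [hf, mul_assoc]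
  exact mul_le_mul_of_nonneg_left this (norm_nonneg z)

theorem tendsto_norm_sub_div_one_sub {g : ℂ → ℂ} {g' ζ : ℂ} (hg : HasDerivAt g g' ζ)
    (hζ : ‖ζ‖ = 1) :
    Tendsto (fun r : ℝ => ‖g (r * ζ) - g ζ‖ / (1 - r)) (𝓝[<] 1) (𝓝 ‖g'‖) := by
  have hray : HasDerivAt (fun r : ℝ => g (r * ζ)) (g' * ζ) 1 := by
    have h : HasDerivAt (fun w : ℂ => g (w * ζ)) (g' * ζ) ((1 : ℝ) : ℂ) := by
      refine HasDerivAt.comp _ (by simpa using hg) ?_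
      simpa using (hasDerivAt_id ((1:ℝ):ℂ)).mul_const ζ
    exact h.comp_ofReal
  have hslope := ((hasDerivAt_iff_tendsto_slope.1 hray).mono_left (nhdsLT_le_nhdsNE 1)).norm
  rw [norm_mul, hζ, mul_one] at hslope
  refine hslope.congr' (eventually_nhdsWithin_of_forall fun r (hr : r < 1) => ?_)
  rw [slope_def_module, norm_smul, norm_inv, Real.norm_eq_abs, abs_of_neg (sub_neg.2 hr),
    Complex.ofReal_one, one_mul, neg_sub, inv_mul_eq_div]

theorem two_div_one_add_le_norm_of_hasDerivAt {g : ℂ → ℂ} {g' ζ : ℂ}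
    (hd : DifferentiableOn ℂ g (ball 0 1)) (hmaps : MapsTo g (ball 0 1) (ball 0 1))
    (h0 : g 0 = 0) (h0' : ‖deriv g 0‖ < 1) (hg : HasDerivAt g g' ζ) (hζ : ‖ζ‖ = 1)
    (hfix : g ζ = ζ) :
    2 / (1 + ‖deriv g 0‖) ≤ ‖g'‖ := by
  set c := ‖deriv g 0‖
  have hc : 0 ≤ c := norm_nonneg _
  have hbound : ∀ᶠ r : ℝ in 𝓝[<] 1, (1 + r) / (1 + c * r) ≤ ‖g (r * ζ) - g ζ‖ / (1 - r) := by
    filter_upwards [Ico_mem_nhdsLT (zero_lt_one' ℝ)] with r ⟨hr0, hr1⟩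
    have hz : ‖(r : ℂ) * ζ‖ = r := by rw [norm_mul, hζ, mul_one, Complex.norm_of_nonneg hr0]
    have hosserman := norm_mul_le_of_mapsTo_ball_of_map_zero hd hmaps h0 h0' (hz.trans_lt hr1)
    rw [hz] at hosserman
    have htriangle : 1 - ‖g (r * ζ)‖ ≤ ‖g (r * ζ) - g ζ‖ := by
      simpa [hfix, hζ, norm_sub_rev] using norm_sub_norm_le ζ (g (r * ζ))
    rw [div_le_div_iff₀ (by positivity) (sub_pos.2 hr1)]
    nlinarith [mul_le_mul_of_nonneg_right htriangle (by positivity : 0 ≤ 1 + c * r)]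
  have hlim : Tendsto (fun r : ℝ => (1 + r) / (1 + c * r)) (𝓝[<] 1) (𝓝 (2 / (1 + c))) := by
    have : ContinuousAt (fun r : ℝ => (1 + r) / (1 + c * r)) 1 :=
      (continuousAt_const.add continuousAt_id).div
        (continuousAt_const.add (continuousAt_const.mul continuousAt_id)) (by positivity)
    simpa [one_add_one_eq_two] using this.tendsto.mono_left nhdsWithin_le_nhds
  exact le_of_tendsto_of_tendsto hlim (tendsto_norm_sub_div_one_sub hg hζ) hbound

theorem boundary_fixed_point_repelling_general
    (g : ℂ → ℂ) (U : Set ℂ) (hU : IsOpen U) (ζ : ℂ) (hζ : ‖ζ‖ = 1)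
    (hζU : ζ ∈ U)
    (hdiff : DifferentiableOn ℂ g (ball (0 : ℂ) 1 ∪ U))
    (hmaps : MapsTo g (ball (0 : ℂ) 1) (ball (0 : ℂ) 1))
    (h0 : g 0 = 0) (h0' : ‖deriv g 0‖ < 1)
    (hfix : g ζ = ζ)
    (hreal : (deriv g ζ).im = 0) (hpos : 0 < (deriv g ζ).re) :
    1 < (deriv g ζ).re := by
  have hder : HasDerivAt g (deriv g ζ) ζ :=
    (hdiff.differentiableAt (mem_of_superset (hU.mem_nhds hζU) subset_union_right)).hasDerivAt
  have hbound := two_div_one_add_le_norm_of_hasDerivAt (hdiff.mono subset_union_left) hmaps h0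
    h0' hder hζ hfix
  have hnorm : ‖deriv g ζ‖ = (deriv g ζ).re := by rw [← abs_re_eq_norm.2 hreal, abs_of_pos hpos]
  have hgt : 1 < 2 / (1 + ‖deriv g 0‖) := by
    rw [lt_div_iff₀ (by positivity)]
    linarith
  linarith

/-- Let `g` be holomorphic on the unit disk with `g(𝔻) ⊆ 𝔻`, not the identity,
`g 0 = 0` and `|g'(0)| < 1`, and suppose `g` extends holomorphically to a neighborhood
`U` of `ζ ∈ ∂𝔻` with `g ζ = ζ`, `g'(ζ)` real and positive, mapping the arc of `∂𝔻` in
`U` into `∂𝔻`. Then `ζ` is a repelling fixed point: `g'(ζ) > 1`. -/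
theorem boundary_fixed_point_repelling
    (g : ℂ → ℂ) (U : Set ℂ) (hU : IsOpen U) (ζ : ℂ) (hζ : ‖ζ‖ = 1)
    (hζU : ζ ∈ U)
    (hdiff : DifferentiableOn ℂ g (ball (0 : ℂ) 1 ∪ U))
    (hmaps : MapsTo g (ball (0 : ℂ) 1) (ball (0 : ℂ) 1))
    (hnotid : ∃ z ∈ ball (0 : ℂ) 1, g z ≠ z)
    (h0 : g 0 = 0) (h0' : ‖deriv g 0‖ < 1)
    (hfix : g ζ = ζ)
    (hreal : (deriv g ζ).im = 0) (hpos : 0 < (deriv g ζ).re)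
    (harc : ∀ z ∈ U, ‖z‖ = 1 → ‖g z‖ = 1) :
    1 < (deriv g ζ).re :=
  boundary_fixed_point_repelling_general g U hU ζ hζ hζU hdiff hmaps h0 h0' hfix hreal hpos
end

section
/- Let h : ℂ → ℂ be a nonconstant entire function (more generally, meromorphic) and B ⊂ ℂ a bounded topological disk whose boundary β is a simple closed curve containing no critical values of h. If W is an unbounded connected component of h^{-1}(B), then the boundary ∂W is unbounded, i.e., ∂W is not contained in any compact subset of ℂ. -/
/-!
If `∂W` were bounded, say `∂W ⊆ closedBall 0 R`, then the connected set `(closedBall 0 R)ᶜ`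
would miss `∂W` while meeting the unbounded open set `W`, hence lie inside `W ⊆ h⁻¹(B)`.
So `h` would be bounded outside a compact set, hence bounded, hence constant by Liouville.
-/

open Set Metric Bornology

section ComplClosedBall

variable {E : Type*} [NormedAddCommGroup E] [NormedSpace ℝ E]

theorem isPathConnected_compl_closedBall (hE : 1 < Module.rank ℝ E) (x : E) (r : ℝ) :
    IsPathConnected (closedBall x r)ᶜ := by
  rcases lt_or_ge r 0 with hr | hr
  · simpa [closedBall_eq_empty.2 hr] using isPathConnected_univ
  -- Push `{0}ᶜ` radially outwards by `r` and translate by `x`.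
  let f : E → E := fun y ↦ x + (1 + r * ‖y‖⁻¹) • y
  have hf : ContinuousOn f {0}ᶜ := fun y hy ↦
    (continuousAt_const.add ((continuousAt_const.add (continuousAt_const.mul
      (continuousAt_id.norm.inv₀ (norm_ne_zero_iff.2 hy)))).smul
        continuousAt_id)).continuousWithinAt
  have himage : f '' {0}ᶜ = (closedBall x r)ᶜ := by
    apply Subset.antisymm
    · rintro - ⟨y, hy, rfl⟩
      have hy : ‖y‖ ≠ 0 := by simpa using hy
      have hnorm : ‖(1 + r * ‖y‖⁻¹) • y‖ = ‖y‖ + r := by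
        rw [norm_smul, Real.norm_of_nonneg (by positivity), add_mul, one_mul, mul_assoc,
          inv_mul_cancel₀ hy, mul_one]
      simp only [f, mem_compl_iff, mem_closedBall, dist_eq_norm, add_sub_cancel_left, hnorm,
        not_le]
      exact lt_add_of_pos_left r (lt_of_le_of_ne (norm_nonneg y) hy.symm)
    · intro z hz
      have hd : r < ‖z - x‖ := by simpa [dist_eq_norm] using hz
      have hd0 : ‖z - x‖ ≠ 0 := (hr.trans_lt hd).ne'
      have hdr : ‖z - x‖ - r ≠ 0 := (sub_pos.2 hd).ne'
      have hnorm : ‖(1 - r * ‖z - x‖⁻¹) • (z - x)‖ = ‖z - x‖ - r := by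
        rw [norm_smul, Real.norm_of_nonneg, sub_mul, one_mul, mul_assoc, inv_mul_cancel₀ hd0,
          mul_one]
        rw [sub_nonneg, ← div_eq_mul_inv, div_le_one (hr.trans_lt hd)]
        exact hd.le
      refine ⟨(1 - r * ‖z - x‖⁻¹) • (z - x), ?_, ?_⟩
      · rw [mem_compl_singleton_iff, ← norm_ne_zero_iff, hnorm]
        exact hdr
      · have hcoeff : (1 + r * (‖z - x‖ - r)⁻¹) * (1 - r * ‖z - x‖⁻¹) = 1 := by
          field_simp
          ring
        simp only [f, hnorm, smul_smul, hcoeff, one_smul, add_sub_cancel]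
  exact himage ▸ (isPathConnected_compl_singleton_of_one_lt_rank hE 0).image' hf

theorem IsOpen.exists_compl_closedBall_subset_of_isBounded_frontier
    (hE : 1 < Module.rank ℝ E) {U : Set E} (hU : IsOpen U) (hUb : ¬IsBounded U)
    (hfr : IsBounded (frontier U)) : ∃ R, (closedBall (0 : E) R)ᶜ ⊆ U := by
  obtain ⟨R, hR⟩ := hfr.subset_closedBall 0
  refine ⟨R, (isPathConnected_compl_closedBall hE 0 R).isConnected.isPreconnected
    |>.subset_of_closure_inter_subset hU ?_ ?_⟩
  · obtain ⟨y, hyU, hy⟩ := not_subset.1 fun hsub ↦ hUb (isBounded_closedBall.subset hsub)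
    exact ⟨y, hy, hyU⟩
  · rintro y ⟨hyc, hy⟩
    rw [closure_eq_self_union_frontier] at hyc
    exact hyc.resolve_right fun hyf ↦ hy (hR hyf)

end ComplClosedBall

theorem Differentiable.apply_eq_apply_of_isBounded_image_compl {E F : Type*}
    [NormedAddCommGroup E] [NormedSpace ℂ E] [NormedAddCommGroup F] [NormedSpace ℂ F]
    {f : E → F} (hf : Differentiable ℂ f) {K : Set E} (hK : IsCompact K)
    (hb : IsBounded (f '' Kᶜ)) (z w : E) : f z = f w := by
  refine hf.apply_eq_apply_of_bounded ?_ z w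
  rw [← image_univ, ← union_compl_self K, image_union]
  exact (hK.image hf.continuous).isBounded.union hb

theorem boundary_of_unbounded_preimage_component_unbounded_general
    (h : ℂ → ℂ) (hh : Differentiable ℂ h) (hnc : ∀ a : ℂ, h ≠ fun _ => a)
    (B : Set ℂ) (hBo : IsOpen B) (hBb : Bornology.IsBounded B)
    (W : Set ℂ) (x : ℂ) (hW : W = connectedComponentIn (h ⁻¹' B) x)
    (hWu : ¬ Bornology.IsBounded W) :
    ¬ Bornology.IsBounded (frontier W) := by
  intro hfr
  have hWo : IsOpen W := hW ▸ (hBo.preimage hh.continuous).connectedComponentIn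
  have hWB : W ⊆ h ⁻¹' B := hW ▸ connectedComponentIn_subset _ _
  obtain ⟨R, hR⟩ := hWo.exists_compl_closedBall_subset_of_isBounded_frontier
    (by simp [Complex.rank_real_complex]) hWu hfr
  have hb : IsBounded (h '' (closedBall 0 R)ᶜ) :=
    hBb.subset (image_subset_iff.2 (hR.trans hWB))
  exact hnc (h 0) <| funext fun z ↦
    hh.apply_eq_apply_of_isBounded_image_compl (isCompact_closedBall 0 R) hb z 0

/-- Let `h` be a nonconstant entire function and `B` a bounded topological disk whose
boundary is a simple closed curve (parametrized by the 1-periodic injective loop `c`)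
containing no critical values of `h`. If `W` is an unbounded connected component of
`h⁻¹(B)`, then `∂W` is unbounded, i.e. not contained in any compact subset of `ℂ`. -/
theorem boundary_of_unbounded_preimage_component_unbounded
    (h : ℂ → ℂ) (hh : Differentiable ℂ h) (hnc : ∀ a : ℂ, h ≠ fun _ => a)
    (B : Set ℂ) (hBo : IsOpen B) (hBb : Bornology.IsBounded B) (hBc : IsConnected B)
    (hBsc : SimplyConnectedSpace B)
    (c : ℝ → ℂ) (hc : Continuous c) (hcp : ∀ t, c (t + 1) = c t)
    (hci : InjOn c (Ico 0 1)) (hcr : range c = frontier B)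
    (hcrit : ∀ z : ℂ, deriv h z = 0 → h z ∉ frontier B)
    (W : Set ℂ) (x : ℂ) (hW : W = connectedComponentIn (h ⁻¹' B) x)
    (hWu : ¬ Bornology.IsBounded W) :
    ¬ Bornology.IsBounded (frontier W) :=
  boundary_of_unbounded_preimage_component_unbounded_general h hh hnc B hBo hBb W x hW hWu
end
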